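/- arXiv:1810.09140 — 6 statements merged into one kernel-verified Lean document; each statement's English description precedes it below -/
import Mathlib

section
/- The set IX of idempotent measures on a compact Hausdorff space X is Max-Plus convex as a subset of ℝ^{C(X)}: if μ, ν ∈ IX and α ∈ [-∞, 0], then the functional φ ↦ max(α + μ(φ), ν(φ)) is again an idempotent measure. -/
open Topology

noncomputable section

def IsIdempotentMeasure {Z : Type*} [TopologicalSpace Z] (μ : C(Z, ℝ) → ℝ) : Prop :=
  μ 1 = 1 ∧ (∀ (c : ℝ) (φ : C(Z, ℝ)), μ (ContinuousMap.const Z c + φ) = c + μ φ) ∧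
    ∀ φ ψ : C(Z, ℝ), μ (φ ⊔ ψ) = max (μ φ) (μ ψ)

abbrev IM (Z : Type*) [TopologicalSpace Z] : Type _ :=
  {μ : C(Z, ℝ) → ℝ // IsIdempotentMeasure μ}

def density {Z : Type*} [TopologicalSpace Z] (μ : C(Z, ℝ) → ℝ) (z : Z) : EReal :=
  ⨅ φ : {φ : C(Z, ℝ) // φ ≤ 0 ∧ φ z = 0}, ((μ φ.1 : ℝ) : EReal)

def pushforward {X Y : Type*} [TopologicalSpace X] [TopologicalSpace Y]
    (f : C(X, Y)) (μ : C(X, ℝ) → ℝ) : C(Y, ℝ) → ℝ :=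
  fun ψ => μ (ψ.comp f)

def mpComb {τ : Type*} (α : EReal) (a b : τ → ℝ) : τ → ℝ :=
  fun t => ((α + (a t : EReal)) ⊔ ((b t : ℝ) : EReal)).toReal

def MaxPlusConvex {τ : Type*} (A : Set (τ → ℝ)) : Prop :=
  ∀ a ∈ A, ∀ b ∈ A, ∀ α : EReal, α ≤ 0 → mpComb α a b ∈ A

def projCM {T : Type*} (A : Set (T → ℝ)) (t : T) : C(A, ℝ) :=
  ⟨fun a => a.1 t, (continuous_apply t).comp continuous_subtype_val⟩

def tilde {Z : Type*} [TopologicalSpace Z] (φ : C(Z, ℝ)) : C(IM Z, ℝ) :=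
  ⟨fun ν => ν.1 φ, (continuous_apply φ).comp continuous_subtype_val⟩

theorem idempotentMeasures_maxPlusConvex {X : Type*} [TopologicalSpace X] [CompactSpace X]
    [T2Space X] (μ ν : C(X, ℝ) → ℝ) (hμ : IsIdempotentMeasure μ)
    (hν : IsIdempotentMeasure ν) (α : EReal) (hα : α ≤ 0) :
    IsIdempotentMeasure (fun φ => ((α + (μ φ : EReal)) ⊔ ((ν φ : ℝ) : EReal)).toReal) := by
  obtain ⟨hμ1, hμ2, hμ3⟩ := hμ
  obtain ⟨hν1, hν2, hν3⟩ := hν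
  induction α with
  | bot =>
    simp only [EReal.bot_add, bot_sup_eq, EReal.toReal_coe]
    exact ⟨hν1, hν2, hν3⟩
  | coe a =>
    have hkey : ∀ x y : ℝ, (((a : EReal) + (x : EReal)) ⊔ ((y : ℝ) : EReal)).toReal
        = max (a + x) y := by
      intro x y
      rw [← EReal.coe_add]
      rcases le_total (a + x) y with h | h
      · rw [sup_eq_right.2 (by exact_mod_cast h), EReal.toReal_coe, max_eq_right h]
      · rw [sup_eq_left.2 (by exact_mod_cast h), EReal.toReal_coe, max_eq_left h]
    have ha : a ≤ 0 := by exact_mod_cast hα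
    refine ⟨?_, ?_, ?_⟩
    · show (((a : EReal) + (μ 1 : EReal)) ⊔ ((ν 1 : ℝ) : EReal)).toReal = 1
      rw [hkey, hμ1, hν1, max_eq_right (by linarith : a + 1 ≤ 1)]
    · intro c φ
      show (((a : EReal) + (μ _ : EReal)) ⊔ ((ν _ : ℝ) : EReal)).toReal
        = c + (((a : EReal) + (μ φ : EReal)) ⊔ ((ν φ : ℝ) : EReal)).toReal
      rw [hkey, hkey, hμ2, hν2, show a + (c + μ φ) = c + (a + μ φ) by ring,
        max_add_add_left]
    · intro φ ψ
      show (((a : EReal) + (μ _ : EReal)) ⊔ ((ν _ : ℝ) : EReal)).toReal = _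
      rw [hkey, hμ3, hν3]
      show _ = max (max (a + μ φ) (ν φ)) (max (a + μ ψ) (ν ψ))
      rw [← max_add_add_left, max_max_max_comm]
  | top => exact absurd hα (by simp)
end
end

section
/- For a compact Hausdorff space X, the set I_ω X of idempotent measures of finite support, i.e., measures of the form φ ↦ max_{1≤i≤n}(λᵢ + φ(xᵢ)) with λᵢ ∈ [-∞,0], max_i λᵢ = 0, xᵢ ∈ X, is dense in IX. -/
open Topology

noncomputable section

/-!
Fix finitely many test functions `φ` and a tolerance `ε`. Cover `X` by finitely many open sets
`U i ∋ x i` on which every `φ` oscillates by less than `ε`, and shift a subordinate bump covering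
down by `1`: this gives `h i ≤ 0` with `h i = -1` off `U i` such that every point has some
`h i = 0`. Then every `ψ` is the maximum of the `c • h i + ψ` (`c ≥ 0`), so
`μ ψ = maxᵢ μ (c • h i + ψ)`. With `λᵢ = limₖ μ (k • h i)`, comparing `φ` with
`φ (x i) ± ε + k • h i` and letting `k → ∞` (a finite maximum commutes with the monotone limit)
gives `|maxᵢ (λᵢ + φ (x i)) - μ φ| ≤ ε`; the case `ψ = 0` gives `maxᵢ λᵢ = 0`.
-/

open Set

theorem EReal.iInf_add_coe {ι : Sort*} (f : ι → EReal) (a : ℝ) :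
    (⨅ i, f i) + a = ⨅ i, (f i + a) :=
  Monotone.map_iInf_of_continuousAt (f := fun x : EReal => x + a)
    ((EReal.continuousAt_add (Or.inr (EReal.coe_ne_bot a)) (Or.inr (EReal.coe_ne_top a))).comp
      (continuousAt_id.prodMk continuousAt_const))
    (fun _ _ h => add_le_add_left h _) (EReal.top_add_coe a)

theorem EReal.abs_toReal_sub_le {x : EReal} {a ε : ℝ} (h₁ : x ≤ a + ε)
    (h₂ : (a : EReal) ≤ x + ε) : |x.toReal - a| ≤ ε := by
  induction x using EReal.rec with
  | bot => simp at h₂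
  | top => exact absurd h₁ (by simp [← EReal.coe_add])
  | coe x =>
    norm_cast at h₁ h₂
    rw [EReal.toReal_coe, abs_sub_le_iff]
    constructor <;> linarith

section Bumps

variable {X : Type*} [TopologicalSpace X]

theorem exists_bumps_of_iUnion_eq_univ [NormalSpace X] [ParacompactSpace X] {ι : Type*}
    {U : ι → Set X} (hU : ∀ i, IsOpen (U i)) (hcov : ⋃ i, U i = univ) :
    ∃ h : ι → C(X, ℝ), (∀ i, h i ≤ 0) ∧ (∀ y, ∃ i, h i y = 0) ∧ ∀ i, ∀ y ∉ U i, h i y = -1 := by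
  obtain ⟨f, hf⟩ := BumpCovering.exists_isSubordinate isClosed_univ U hU hcov.ge
  refine ⟨fun i => f i - 1, fun i y => ?_, fun y => ⟨f.ind y (mem_univ y), ?_⟩, fun i y hy => ?_⟩
  · simpa using f.le_one i y
  · simp [f.ind_apply]
  · simp [image_eq_zero_of_notMem_tsupport fun hy' => hy (hf i hy')]

theorem exists_finset_bumps_small_oscillation [CompactSpace X] [T2Space X] {I : Set C(X, ℝ)}
    (hI : I.Finite) {ε : C(X, ℝ) → ℝ} (hε : ∀ φ ∈ I, 0 < ε φ) :
    ∃ (t : Finset X) (h : t → C(X, ℝ)), (∀ i, h i ≤ 0) ∧ (∀ y, ∃ i, h i y = 0) ∧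
      ∀ φ ∈ I, ∀ i y, h i y = -1 ∨ |φ y - φ i| ≤ ε φ := by
  set U : X → Set X := fun z => ⋂ φ ∈ I, {y | |φ y - φ z| < ε φ}
  have hUo (z : X) : IsOpen (U z) :=
    hI.isOpen_biInter fun φ _ => isOpen_lt (by fun_prop) continuous_const
  have hUz (z : X) : z ∈ U z := mem_iInter₂.2 fun φ hφ => by simpa using hε φ hφ
  obtain ⟨t, ht⟩ := isCompact_univ.elim_finite_subcover U hUo fun y _ => mem_iUnion.2 ⟨y, hUz y⟩
  have htcov : ⋃ i : t, U i = univ := eq_univ_of_forall fun y => by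
    obtain ⟨z, hz, hyz⟩ := mem_iUnion₂.1 (ht (mem_univ y))
    exact mem_iUnion.2 ⟨⟨z, hz⟩, hyz⟩
  obtain ⟨h, hh, hcov, hoff⟩ := exists_bumps_of_iUnion_eq_univ (fun i : t => hUo i) htcov
  refine ⟨t, h, hh, hcov, fun φ hφ i y => ?_⟩
  by_cases hy : y ∈ U i
  · exact Or.inr (mem_iInter₂.1 hy φ hφ).le
  · exact Or.inl (hoff i y hy)

variable [CompactSpace X] {φ h : C(X, ℝ)} {x : X} {ε : ℝ}

theorem const_add_smul_le (hh : h ≤ 0) (hloc : ∀ y, h y = -1 ∨ |φ y - φ x| ≤ ε) (hε : 0 ≤ ε)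
    {c : ℝ} (hc : 2 * ‖φ‖ ≤ c) : ContinuousMap.const X (φ x - ε) + c • h ≤ φ := by
  refine ContinuousMap.le_def.mpr fun y => ?_
  have hosc : |φ y - φ x| ≤ 2 * ‖φ‖ := φ.dist_le_two_norm y x
  have hy0 : h y ≤ 0 := hh y
  simp only [ContinuousMap.add_apply, ContinuousMap.const_apply, ContinuousMap.smul_apply,
    smul_eq_mul]
  rcases hloc y with hy | hy
  · rw [hy]
    linarith [abs_le.mp hosc]
  · nlinarith [abs_le.mp hy, norm_nonneg φ]

theorem smul_add_le_const_add_smul (hh : h ≤ 0) (hloc : ∀ y, h y = -1 ∨ |φ y - φ x| ≤ ε)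
    (hε : 0 ≤ ε) (c : ℝ) :
    (c + 2 * ‖φ‖) • h + φ ≤ ContinuousMap.const X (φ x + ε) + c • h := by
  refine ContinuousMap.le_def.mpr fun y => ?_
  have hosc : |φ y - φ x| ≤ 2 * ‖φ‖ := φ.dist_le_two_norm y x
  have hy0 : h y ≤ 0 := hh y
  simp only [ContinuousMap.add_apply, ContinuousMap.const_apply, ContinuousMap.smul_apply,
    smul_eq_mul]
  rcases hloc y with hy | hy
  · rw [hy]
    linarith [abs_le.mp hosc]
  · nlinarith [abs_le.mp hy, norm_nonneg φ]

end Bumps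

/-- The coefficient `λ` that an idempotent measure gives to a bump `h ≤ 0`: the limit of the
antitone sequence `μ (k • h)`, possibly `⊥`. -/
def bumpWeight {X : Type*} [TopologicalSpace X] (μ : C(X, ℝ) → ℝ) (h : C(X, ℝ)) : EReal :=
  ⨅ k : ℕ, ((μ ((k : ℝ) • h) : ℝ) : EReal)

theorem bumpWeight_le {X : Type*} [TopologicalSpace X] {μ : C(X, ℝ) → ℝ} {h : C(X, ℝ)} (k : ℕ) :
    bumpWeight μ h ≤ μ ((k : ℝ) • h) :=
  iInf_le _ k

namespace IsIdempotentMeasure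

variable {X : Type*} [TopologicalSpace X] {μ : C(X, ℝ) → ℝ}

theorem map_const_add (hμ : IsIdempotentMeasure μ) (c : ℝ) (φ : C(X, ℝ)) :
    μ (ContinuousMap.const X c + φ) = c + μ φ :=
  hμ.2.1 c φ

theorem map_sup (hμ : IsIdempotentMeasure μ) (φ ψ : C(X, ℝ)) : μ (φ ⊔ ψ) = μ φ ⊔ μ ψ :=
  hμ.2.2 φ ψ

theorem map_zero (hμ : IsIdempotentMeasure μ) : μ 0 = 0 := by
  have h := hμ.map_const_add 1 0
  rw [add_zero, ContinuousMap.const_one, hμ.1] at h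
  linarith

theorem nonempty (hμ : IsIdempotentMeasure μ) : Nonempty X := by
  by_contra hX
  rw [not_nonempty_iff] at hX
  have h10 : (1 : C(X, ℝ)) = 0 := ContinuousMap.ext isEmptyElim
  have h1 := hμ.1
  rw [h10, hμ.map_zero] at h1
  exact zero_ne_one h1

theorem monotone (hμ : IsIdempotentMeasure μ) : Monotone μ := fun φ ψ hle => by
  have h := hμ.map_sup φ ψ
  rw [sup_eq_right.mpr hle] at h
  rw [h]
  exact le_sup_left

theorem map_finset_sup' (hμ : IsIdempotentMeasure μ) {ι : Type*} {s : Finset ι} (hs : s.Nonempty)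
    (f : ι → C(X, ℝ)) : μ (s.sup' hs f) = s.sup' hs (μ ∘ f) :=
  Finset.apply_sup'_eq_sup'_comp hs μ hμ.map_sup

theorem exists_map_smul_add_eq (hμ : IsIdempotentMeasure μ) {ι : Type*} [Finite ι]
    {h : ι → C(X, ℝ)} (hh : ∀ i, h i ≤ 0) (hcov : ∀ y, ∃ i, h i y = 0) {c : ℝ} (hc : 0 ≤ c)
    (ψ : C(X, ℝ)) : ∃ i, μ (c • h i + ψ) = μ ψ := by
  have : Nonempty ι := by
    obtain ⟨y⟩ := hμ.nonempty
    exact ⟨(hcov y).choose⟩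
  cases nonempty_fintype ι
  have hψ : Finset.univ.sup' Finset.univ_nonempty (fun i => c • h i + ψ) = ψ := by
    ext y
    rw [ContinuousMap.sup'_apply]
    refine le_antisymm (Finset.sup'_le _ _ fun i _ => ?_) ?_
    · simpa using mul_nonpos_of_nonneg_of_nonpos hc (hh i y)
    · obtain ⟨i, hi⟩ := hcov y
      exact Finset.le_sup'_of_le _ (Finset.mem_univ i) (by simp [hi])
  obtain ⟨i, -, hi⟩ := Finset.exists_mem_eq_sup' Finset.univ_nonempty (μ ∘ fun i => c • h i + ψ)
  exact ⟨i, hi.symm.trans <| (hμ.map_finset_sup' _ _).symm.trans (congrArg μ hψ)⟩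

theorem antitone_map_natCast_smul (hμ : IsIdempotentMeasure μ) {h : C(X, ℝ)} (hh : h ≤ 0) :
    Antitone fun k : ℕ => μ ((k : ℝ) • h) := fun k k' hkk' =>
  hμ.monotone fun y => by
    simpa using mul_le_mul_of_nonpos_right (Nat.cast_le.mpr hkk') (hh y)

theorem bumpWeight_nonpos (hμ : IsIdempotentMeasure μ) {h : C(X, ℝ)} : bumpWeight μ h ≤ 0 :=
  (bumpWeight_le 0).trans (by simp [hμ.map_zero])

theorem iSup_bumpWeight (hμ : IsIdempotentMeasure μ) {ι : Type*} [Finite ι] {h : ι → C(X, ℝ)}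
    (hh : ∀ i, h i ≤ 0) (hcov : ∀ y, ∃ i, h i y = 0) : ⨆ i, bumpWeight μ (h i) = 0 := by
  refine le_antisymm (iSup_le fun i => hμ.bumpWeight_nonpos) ?_
  simp only [bumpWeight]
  rw [← iInf_iSup_of_antitone (f := fun i (k : ℕ) => ((μ ((k : ℝ) • h i) : ℝ) : EReal))
    fun i => EReal.coe_strictMono.monotone.comp_antitone (hμ.antitone_map_natCast_smul (hh i))]
  refine le_iInf fun k => ?_
  obtain ⟨i, hi⟩ := hμ.exists_map_smul_add_eq hh hcov k.cast_nonneg 0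
  rw [add_zero, hμ.map_zero] at hi
  exact le_iSup_of_le i (by simp [hi])

variable [CompactSpace X] {φ : C(X, ℝ)} {ε : ℝ}

theorem bumpWeight_add_le (hμ : IsIdempotentMeasure μ) {h : C(X, ℝ)} {x : X} (hh : h ≤ 0)
    (hloc : ∀ y, h y = -1 ∨ |φ y - φ x| ≤ ε) (hε : 0 ≤ ε) :
    bumpWeight μ h + φ x ≤ (μ φ : EReal) + ε := by
  obtain ⟨k, hk⟩ := exists_nat_ge (2 * ‖φ‖)
  have hbound : φ x - ε + μ ((k : ℝ) • h) ≤ μ φ := by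
    rw [← hμ.map_const_add]
    exact hμ.monotone (const_add_smul_le hh hloc hε hk)
  calc bumpWeight μ h + φ x ≤ (μ ((k : ℝ) • h) : EReal) + φ x := by
        gcongr
        exact bumpWeight_le k
    _ ≤ (μ φ : EReal) + ε := by
        rw [← EReal.coe_add, ← EReal.coe_add, EReal.coe_le_coe_iff]
        linarith

theorem le_iSup_bumpWeight_add (hμ : IsIdempotentMeasure μ) {ι : Type*} [Finite ι]
    {h : ι → C(X, ℝ)} {x : ι → X} (hh : ∀ i, h i ≤ 0) (hcov : ∀ y, ∃ i, h i y = 0)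
    (hloc : ∀ i y, h i y = -1 ∨ |φ y - φ (x i)| ≤ ε) (hε : 0 ≤ ε) :
    (μ φ : EReal) ≤ (⨆ i, (bumpWeight μ (h i) + φ (x i))) + ε := by
  have hshift (k : ℕ) :
      (μ φ : EReal) ≤ ⨆ i, ((μ ((k : ℝ) • h i) : EReal) + (φ (x i) + ε : ℝ)) := by
    obtain ⟨i, hi⟩ := hμ.exists_map_smul_add_eq hh hcov (c := k + 2 * ‖φ‖) (by positivity) φ
    refine le_iSup_of_le i ?_
    rw [← hi, ← EReal.coe_add, EReal.coe_le_coe_iff]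
    calc μ ((k + 2 * ‖φ‖) • h i + φ)
        ≤ μ (ContinuousMap.const X (φ (x i) + ε) + (k : ℝ) • h i) :=
          hμ.monotone (smul_add_le_const_add_smul (hh i) (hloc i) hε k)
      _ = μ ((k : ℝ) • h i) + (φ (x i) + ε) := by rw [hμ.map_const_add, add_comm]
  calc (μ φ : EReal)
      ≤ ⨅ k : ℕ, ⨆ i, ((μ ((k : ℝ) • h i) : EReal) + (φ (x i) + ε : ℝ)) := le_iInf hshift
    _ = ⨆ i, ⨅ k : ℕ, ((μ ((k : ℝ) • h i) : EReal) + (φ (x i) + ε : ℝ)) :=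
        iInf_iSup_of_antitone fun i k k' hkk' => by
          gcongr
          exact hμ.antitone_map_natCast_smul (hh i) hkk'
    _ = ⨆ i, (bumpWeight μ (h i) + (φ (x i) + ε : ℝ)) := by
        simp only [bumpWeight, EReal.iInf_add_coe]
    _ ≤ (⨆ i, (bumpWeight μ (h i) + φ (x i))) + ε := iSup_le fun i => by
        rw [EReal.coe_add, ← add_assoc]
        gcongr
        exact le_iSup (fun i => bumpWeight μ (h i) + φ (x i)) i

theorem exists_finite_approx [T2Space X] (hμ : IsIdempotentMeasure μ) {I : Set C(X, ℝ)}
    (hI : I.Finite) {ε : C(X, ℝ) → ℝ} (hε : ∀ φ ∈ I, 0 < ε φ) :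
    ∃ (t : Finset X) (l : t → EReal), (∀ i, l i ≤ 0) ∧ ⨆ i, l i = 0 ∧
      ∀ φ ∈ I, |(⨆ i, (l i + φ i)).toReal - μ φ| ≤ ε φ := by
  obtain ⟨t, h, hh, hcov, hloc⟩ := exists_finset_bumps_small_oscillation hI hε
  refine ⟨t, fun i => bumpWeight μ (h i), fun i => hμ.bumpWeight_nonpos,
    hμ.iSup_bumpWeight hh hcov, fun φ hφ => ?_⟩
  have hε0 := (hε φ hφ).le
  exact EReal.abs_toReal_sub_le (iSup_le fun i => hμ.bumpWeight_add_le (hh i) (hloc φ hφ i) hε0)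
    (hμ.le_iSup_bumpWeight_add (x := Subtype.val) hh hcov (hloc φ hφ) hε0)

end IsIdempotentMeasure

def finitelySupported (X : Type*) [TopologicalSpace X] : Set (C(X, ℝ) → ℝ) :=
  {μ | ∃ (n : ℕ) (x : Fin n → X) (l : Fin n → EReal),
    (∀ i, l i ≤ 0) ∧ (⨆ i, l i) = 0 ∧ μ = fun φ => (⨆ i, (l i + (φ (x i) : EReal))).toReal}

theorem mem_finitelySupported {X : Type*} [TopologicalSpace X] {ι : Type*} [Finite ι]
    (x : ι → X) {l : ι → EReal} (hl : ∀ i, l i ≤ 0) (hsup : ⨆ i, l i = 0) :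
    (fun φ : C(X, ℝ) => (⨆ i, (l i + (φ (x i) : EReal))).toReal) ∈ finitelySupported X := by
  obtain ⟨n, ⟨e⟩⟩ := Finite.exists_equiv_fin ι
  refine ⟨n, x ∘ e.symm, l ∘ e.symm, fun i => hl _, (e.symm.iSup_comp (g := l)).trans hsup, ?_⟩
  funext φ
  exact congrArg EReal.toReal (e.symm.iSup_comp (g := fun i => l i + (φ (x i) : EReal))).symm

theorem finitelySupported_dense {X : Type*} [TopologicalSpace X] [CompactSpace X]
    [T2Space X] :
    {μ : C(X, ℝ) → ℝ | IsIdempotentMeasure μ} ⊆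
      closure {μ : C(X, ℝ) → ℝ | ∃ (n : ℕ) (x : Fin n → X) (l : Fin n → EReal),
        (∀ i, l i ≤ 0) ∧ (⨆ i, l i) = 0 ∧
        μ = fun φ => (⨆ i, (l i + (φ (x i) : EReal))).toReal} := by
  intro μ hμ
  change μ ∈ closure (finitelySupported X)
  have hbasis := Filter.hasBasis_pi fun φ : C(X, ℝ) => Metric.nhds_basis_ball (x := μ φ)
  rw [← nhds_pi] at hbasis
  rw [mem_closure_iff_nhds_basis hbasis]
  rintro ⟨I, δ⟩ ⟨hI, hδ⟩
  obtain ⟨t, l, hl, hsup, happrox⟩ :=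
    hμ.exists_finite_approx hI (ε := fun φ => δ φ / 2) fun φ hφ => half_pos (hδ φ hφ)
  refine ⟨_, mem_finitelySupported Subtype.val hl hsup, mem_pi.2 fun φ hφ => ?_⟩
  rw [Metric.mem_ball, Real.dist_eq]
  exact (happrox φ hφ).trans_lt (half_lt_self (hδ φ hφ))
end
end

section
/- Let A be a closed subset of a compact Hausdorff space X and ν an idempotent measure on X with density d_ν. Then ν lies in IA (i.e., ν(φ) depends only on φ|_A, equivalently ν is induced by an idempotent measure on A) if and only if {x ∈ X : d_ν(x) > -∞} ⊆ A. -/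
open Topology

noncomputable section

lemma nu_zero {X : Type*} [TopologicalSpace X] {ν : C(X, ℝ) → ℝ}
    (hν : IsIdempotentMeasure ν) : ν 0 = 0 := by
  have h := hν.2.1 1 0
  have h1 : ContinuousMap.const X 1 + 0 = (1 : C(X, ℝ)) := by ext x; simp
  rw [h1, hν.1] at h
  linarith

lemma nu_mono {X : Type*} [TopologicalSpace X] {ν : C(X, ℝ) → ℝ}
    (hν : IsIdempotentMeasure ν) {φ ψ : C(X, ℝ)} (h : φ ≤ ψ) : ν φ ≤ ν ψ := by
  have h2 := hν.2.2 φ ψ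
  rw [sup_eq_right.mpr h] at h2
  rw [h2]
  exact le_max_left _ _

lemma nu_key {X : Type*} [TopologicalSpace X] [CompactSpace X] {A : Set X}
    {ν : C(X, ℝ) → ℝ} (hν : IsIdempotentMeasure ν)
    (hd : ∀ x, x ∉ A → density ν x = ⊥) {φ ψ : C(X, ℝ)}
    (h : Set.EqOn φ ψ A) : ν φ ≤ ν ψ := by
  by_contra hcon
  push_neg at hcon
  set ε : ℝ := (ν φ - ν ψ) / 2 with hεdef
  have hε : 0 < ε := by simp only [hεdef]; linarith
  suffices hsuff : ν φ ≤ ν ψ + ε by simp only [hεdef] at hsuff; linarith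
  set K : Set X := {x | ψ x + ε ≤ φ x} with hKdef
  have hKc : IsCompact K := (isClosed_le (ψ.continuous.add continuous_const)
    φ.continuous).isCompact
  have hKA : ∀ x ∈ K, x ∉ A := by
    intro x hx hxA
    have := h hxA
    have hx' : ψ x + ε ≤ φ x := hx
    rw [this] at hx'
    linarith
  set C : ℝ := ‖φ‖ + ε with hCdef
  have hφC : ∀ x, φ x ≤ C - ε := by
    intro x
    have := φ.norm_coe_le_norm x
    have := le_abs_self (φ x)
    simp only [hCdef]
    have h2 : |φ x| ≤ ‖φ‖ := by simpa [Real.norm_eq_abs] using φ.norm_coe_le_norm x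
    linarith
  set r : ℝ := ν ψ + ε - C with hrdef
  have hgood : ∀ x : K, ∃ χ : C(X, ℝ), χ ≤ 0 ∧ χ (x : X) = 0 ∧ ν χ < r := by
    intro x
    have hx : density ν (x : X) = ⊥ := hd x (hKA x x.2)
    have hlt : density ν (x : X) < (r : EReal) := by rw [hx]; exact EReal.bot_lt_coe r
    rw [density] at hlt
    obtain ⟨⟨χ, hle, hx0⟩, hlt'⟩ := iInf_lt_iff.mp hlt
    exact ⟨χ, hle, hx0, by exact_mod_cast hlt'⟩
  choose χ hχ0 hχx hχr using hgood
  set U : K → Set X := fun i => (χ i) ⁻¹' Set.Ioi (-ε) with hUdef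
  have hUopen : ∀ i, IsOpen (U i) := fun i => (χ i).continuous.isOpen_preimage _ isOpen_Ioi
  have hcover : K ⊆ ⋃ i, U i := by
    intro x hx
    exact Set.mem_iUnion.mpr ⟨⟨x, hx⟩, by simp [hUdef, hχx ⟨x, hx⟩, hε]⟩
  obtain ⟨t, ht⟩ := hKc.elim_finite_subcover U hUopen hcover
  rcases t.eq_empty_or_nonempty with hte | hte
  · -- K empty
    have hKe : ∀ x, φ x < ψ x + ε := by
      intro x
      by_contra hx
      push_neg at hx
      have := ht hx
      simp [hte] at this
    have hle : φ ≤ ContinuousMap.const X ε + ψ := by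
      intro x
      simpa using (hKe x).le.trans (by simp [add_comm])
    calc ν φ ≤ ν (ContinuousMap.const X ε + ψ) := nu_mono hν hle
      _ = ε + ν ψ := hν.2.1 ε ψ
      _ = ν ψ + ε := by ring
  · set Χ : C(X, ℝ) := t.sup' hte χ with hΧdef
    have hΧν : ν Χ = t.sup' hte fun i => ν (χ i) :=
      Finset.comp_sup'_eq_sup'_comp hte ν (fun a b => hν.2.2 a b)
    have hΧr : ν Χ < r := by
      rw [hΧν]
      exact (Finset.sup'_lt_iff hte).mpr fun i _ => hχr i
    set θ : C(X, ℝ) := (ContinuousMap.const X ε + ψ) ⊔ (ContinuousMap.const X C + Χ) with hθdef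
    have hφθ : φ ≤ θ := by
      intro x
      by_cases hx : x ∈ K
      · obtain ⟨i, hit, hxU⟩ : ∃ i ∈ t, x ∈ U i := by
          have := ht hx
          simpa using this
        have h1 : χ i x < Χ x ∨ χ i x ≤ Χ x := by
          right
          have : χ i ≤ Χ := Finset.le_sup' χ hit
          exact this x
        have h2 : -ε < Χ x := lt_of_lt_of_le hxU (by rcases h1 with h | h <;> [exact h.le; exact h])
        have h3 : φ x ≤ C - ε := hφC x
        have : φ x ≤ C + Χ x := by linarith
        calc φ x ≤ (ContinuousMap.const X C + Χ) x := by simpa using this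
          _ ≤ θ x := by simp [hθdef]
      · have : φ x < ψ x + ε := by
          by_contra hx'
          push_neg at hx'
          exact hx hx'
        calc φ x ≤ (ContinuousMap.const X ε + ψ) x := by simp; linarith
          _ ≤ θ x := by simp [hθdef]
    have hθν : ν θ = max (ε + ν ψ) (C + ν Χ) := by
      rw [hθdef, hν.2.2, hν.2.1, hν.2.1]
    have := nu_mono hν hφθ
    rw [hθν] at this
    have h4 : C + ν Χ < ν ψ + ε := by simp only [hrdef] at hΧr; linarith
    rcases max_le_iff.mp (le_refl (max (ε + ν ψ) (C + ν Χ))) with _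
    have h5 : max (ε + ν ψ) (C + ν Χ) ≤ ν ψ + ε := max_le (by linarith) h4.le
    linarith

lemma nu_eqOn {X : Type*} [TopologicalSpace X] [CompactSpace X] {A : Set X}
    {ν : C(X, ℝ) → ℝ} (hν : IsIdempotentMeasure ν)
    (hd : ∀ x, x ∉ A → density ν x = ⊥) {φ ψ : C(X, ℝ)}
    (h : Set.EqOn φ ψ A) : ν φ = ν ψ :=
  le_antisymm (nu_key hν hd h) (nu_key hν hd h.symm)

theorem mem_IA_iff_density_support {X : Type*} [TopologicalSpace X] [CompactSpace X]
    [T2Space X] (A : Set X) (hA : IsClosed A) (ν : C(X, ℝ) → ℝ)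
    (hν : IsIdempotentMeasure ν) :
    (∃ ν' : C(A, ℝ) → ℝ, IsIdempotentMeasure ν' ∧
        ∀ φ : C(X, ℝ), ν φ = ν' (φ.restrict A)) ↔
      {x : X | ⊥ < density ν x} ⊆ A := by
  constructor
  · rintro ⟨ν', hν', hres⟩ x hx
    by_contra hxA
    have hν'0 : ν' 0 = 0 := nu_zero hν'
    -- Urysohn
    obtain ⟨f, hf0, hf1, hf01⟩ := exists_continuous_zero_one_of_isClosed hA
      (isClosed_singleton (x := x)) (by simpa [Set.disjoint_singleton_right] using hxA)
    have hdle : ∀ n : ℕ, density ν x ≤ ((-(n : ℝ) : ℝ) : EReal) := by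
      intro n
      set φn : C(X, ℝ) := (n : ℝ) • (f - 1) with hφn
      have hφle : φn ≤ 0 := by
        intro y
        have h1 := (hf01 y).2
        show φn y ≤ (0 : C(X, ℝ)) y
        simp only [hφn, ContinuousMap.smul_apply, ContinuousMap.sub_apply,
          ContinuousMap.one_apply, ContinuousMap.zero_apply, smul_eq_mul]
        nlinarith [Nat.cast_nonneg (α := ℝ) n]
      have hφx : φn x = 0 := by
        have : f x = 1 := hf1 rfl
        simp [hφn, this]
      have hφres : φn.restrict A = ContinuousMap.const A (-(n : ℝ)) := by
        ext a
        have : f (a : X) = 0 := hf0 a.2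
        simp [hφn, ContinuousMap.restrict_apply, this]
      have hνφ : ν φn = -(n : ℝ) := by
        rw [hres φn, hφres]
        have h2 := hν'.2.1 (-(n : ℝ)) 0
        have heq : ContinuousMap.const (↑A) (-(n : ℝ)) + 0
            = ContinuousMap.const (↑A) (-(n : ℝ)) := by ext a; simp
        rw [heq, hν'0, add_zero] at h2
        exact h2
      have hle : density ν x ≤ ((ν φn : ℝ) : EReal) := by
        rw [density]
        exact iInf_le (fun φ : {φ : C(X, ℝ) // φ ≤ 0 ∧ φ x = 0} => ((ν φ.1 : ℝ) : EReal))
          ⟨φn, hφle, hφx⟩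
      rw [hνφ] at hle
      exact hle
    -- derive contradiction with ⊥ < density ν x
    obtain ⟨s, hs1, hs2⟩ := EReal.lt_iff_exists_real_btwn.mp hx
    obtain ⟨n, hn⟩ := exists_nat_gt (-s)
    have := hdle n
    have hlt : ((-(n : ℝ) : ℝ) : EReal) < (s : EReal) := by
      exact_mod_cast (by linarith : (-(n : ℝ)) < s)
    exact absurd (lt_of_le_of_lt (this.trans hlt.le) hs2) (lt_irrefl _)
  · intro hd
    have hd' : ∀ x, x ∉ A → density ν x = ⊥ := by
      intro x hxA
      by_contra hne
      exact hxA (hd (bot_lt_iff_ne_bot.mpr hne))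
    -- A nonempty
    have hAne : A.Nonempty := by
      by_contra hAe
      push_neg at hAe
      have h0 : Set.EqOn (0 : C(X, ℝ)) (ContinuousMap.const X (-1)) A := by
        rw [hAe]; exact fun x hx => hx.elim
      have := nu_eqOn hν hd' h0
      have hc : ν (ContinuousMap.const X (-1)) = -1 := by
        have h2 := hν.2.1 (-1) 0
        have h3 := nu_zero hν
        have heq : ν (ContinuousMap.const X (-1) + 0) = ν (ContinuousMap.const X (-1)) := by
          congr 1; ext; simp
        linarith
      rw [nu_zero hν, hc] at this
      linarith
    have : Nonempty A := hAne.to_subtype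
    -- Tietze extension
    have hext : ∀ ψ : C(A, ℝ), ∃ g : C(X, ℝ), g.restrict A = ψ := fun ψ =>
      ContinuousMap.exists_restrict_eq hA ψ
    choose E hE using hext
    have hEon : ∀ (ψ : C(A, ℝ)) (a : X) (ha : a ∈ A), E ψ a = ψ ⟨a, ha⟩ := by
      intro ψ a ha
      have := congrArg (fun g => g ⟨a, ha⟩) (hE ψ)
      simpa [ContinuousMap.restrict_apply] using this
    refine ⟨fun ψ => ν (E ψ), ⟨?_, ?_, ?_⟩, ?_⟩
    · show ν (E 1) = 1
      have h1 : Set.EqOn (⇑(E 1)) (⇑(1 : C(X, ℝ))) A := fun a ha => by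
        simp [hEon 1 a ha]
      rw [nu_eqOn hν hd' h1, hν.1]
    · intro c ψ
      show ν (E (ContinuousMap.const (↑A) c + ψ)) = c + ν (E ψ)
      have h1 : Set.EqOn (⇑(E (ContinuousMap.const (↑A) c + ψ)))
          (⇑(ContinuousMap.const X c + E ψ)) A := by
        intro a ha
        simp [hEon _ a ha, hEon ψ a ha]
      rw [nu_eqOn hν hd' h1, hν.2.1]
    · intro ψ₁ ψ₂
      show ν (E (ψ₁ ⊔ ψ₂)) = max (ν (E ψ₁)) (ν (E ψ₂))
      have h1 : Set.EqOn (⇑(E (ψ₁ ⊔ ψ₂))) (⇑(E ψ₁ ⊔ E ψ₂)) A := by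
        intro a ha
        simp [hEon _ a ha, hEon ψ₁ a ha, hEon ψ₂ a ha]
      rw [nu_eqOn hν hd' h1, hν.2.2]
    · intro φ
      show ν φ = ν (E (φ.restrict A))
      have h1 : Set.EqOn (⇑φ) (⇑(E (φ.restrict A))) A := by
        intro a ha
        simp [hEon _ a ha]
      exact nu_eqOn hν hd' h1
end
end

section
/- Let f: X → Y be a continuous map between compact Hausdorff spaces and ν an idempotent measure on X. Then the density of the pushforward satisfies d_{If(ν)}(y) = max{d_ν(x) : x ∈ f⁻¹(y)} for every y ∈ Y (with the max of the empty set equal to -∞). -/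
open Topology

noncomputable section

section Aux

variable {Z : Type*} [TopologicalSpace Z] {ν : C(Z, ℝ) → ℝ}

lemma IM.mono (hν : IsIdempotentMeasure ν) {φ χ : C(Z, ℝ)} (h : φ ≤ χ) : ν φ ≤ ν χ := by
  have := hν.2.2 φ χ
  rw [sup_eq_right.mpr h] at this
  rw [this]; exact le_max_left _ _

lemma IM.zero (hν : IsIdempotentMeasure ν) : ν 0 = 0 := by
  have e : ContinuousMap.const Z (-1) + 1 = (0 : C(Z, ℝ)) := by ext x; simp
  have : ν 0 = -1 + ν 1 := by rw [← e]; exact hν.2.1 (-1) 1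
  rw [hν.1] at this; linarith

lemma IM.const (hν : IsIdempotentMeasure ν) (c : ℝ) : ν (ContinuousMap.const Z c) = c := by
  have := hν.2.1 c 0
  simpa [IM.zero hν] using this

end Aux

theorem density_pushforward {X Y : Type*} [TopologicalSpace X] [CompactSpace X]
    [T2Space X] [TopologicalSpace Y] [CompactSpace Y] [T2Space Y]
    (f : C(X, Y)) (ν : C(X, ℝ) → ℝ) (hν : IsIdempotentMeasure ν) :
    ∀ y : Y, density (pushforward f ν) y = ⨆ x : (f ⁻¹' {y} : Set X), density ν x.1 := by
  intro y
  set F : Set X := f ⁻¹' {y} with hF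
  -- easy direction
  have hge : (⨆ x : F, density ν x.1) ≤ density (pushforward f ν) y := by
    apply iSup_le
    rintro ⟨x, hx⟩
    apply le_iInf
    rintro ⟨ψ, hψle, hψy⟩
    have hx' : f x = y := hx
    refine iInf_le_of_le ⟨ψ.comp f, ?_, ?_⟩ ?_
    · rw [ContinuousMap.le_def]
      intro x'
      exact ContinuousMap.le_def.mp hψle (f x')
    · simp [hx', hψy]
    · exact le_refl _
  -- density of pushforward is ≤ 0 (using ψ = 0)
  have hD0 : density (pushforward f ν) y ≤ ((0 : ℝ) : EReal) := by
    refine iInf_le_of_le ⟨0, le_refl _, rfl⟩ ?_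
    have : pushforward f ν 0 = 0 := by
      show ν ((0 : C(Y, ℝ)).comp f) = 0
      rw [ContinuousMap.zero_comp]
      exact IM.zero hν
    rw [this]
  -- main estimate
  have hle : ∀ r : ℝ, (⨆ x : F, density ν x.1) < (r : EReal) →
      density (pushforward f ν) y ≤ (r : EReal) := by
    intro r hr
    unfold density
    obtain ⟨r', hr'1, hr'2⟩ := EReal.exists_between_coe_real hr
    by_cases hne : F.Nonempty
    · -- nonempty fiber
      set ε : ℝ := r - r' with hε
      have hεpos : 0 < ε := by
        have : r' < r := by exact_mod_cast hr'2
        simp [hε]; linarith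
      have key : ∀ x : F, ∃ φ : C(X, ℝ), φ ≤ 0 ∧ φ x.1 = 0 ∧ ν φ < r' := by
        intro x
        have hd : density ν x.1 < (r' : EReal) :=
          lt_of_le_of_lt (le_iSup (fun x : F => density ν x.1) x) hr'1
        unfold density at hd
        obtain ⟨⟨φ, h1, h2⟩, h3⟩ := iInf_lt_iff.mp hd
        exact ⟨φ, h1, h2, by exact_mod_cast h3⟩
      choose φx hφ1 hφ2 hφ3 using key
      have hFc : IsCompact F := (isClosed_singleton.preimage f.continuous).isCompact
      have hcov : F ⊆ ⋃ x : F, (φx x) ⁻¹' Set.Ioi (-ε) := by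
        intro z hz
        refine Set.mem_iUnion.mpr ⟨⟨z, hz⟩, ?_⟩
        simp only [Set.mem_preimage, Set.mem_Ioi, hφ2 ⟨z, hz⟩]
        linarith
      obtain ⟨t, ht⟩ := hFc.elim_finite_subcover (fun x : F => (φx x) ⁻¹' Set.Ioi (-ε))
        (fun x => isOpen_Ioi.preimage (φx x).continuous) hcov
      obtain ⟨x0, hx0⟩ := hne
      obtain ⟨i0, hi0t, _⟩ := Set.mem_iUnion₂.mp (ht hx0)
      have htne : t.Nonempty := ⟨i0, hi0t⟩
      set Φ : C(X, ℝ) := t.sup' htne φx with hΦ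
      have hΦle : Φ ≤ 0 := Finset.sup'_le _ _ (fun i _ => hφ1 i)
      have hΦν : ν Φ < r' := by
        have e : ν Φ = t.sup' htne (ν ∘ φx) :=
          Finset.comp_sup'_eq_sup'_comp htne ν (fun a b => hν.2.2 a b)
        rw [e]
        exact (Finset.sup'_lt_iff htne).mpr (fun i _ => hφ3 i)
      have hΦF : ∀ z ∈ F, -ε < Φ z := by
        intro z hz
        obtain ⟨i, hit, hiz⟩ := Set.mem_iUnion₂.mp (ht hz)
        have : φx i ≤ Φ := Finset.le_sup' φx hit
        exact lt_of_lt_of_le hiz (ContinuousMap.le_def.mp this z)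
      set K : Set X := Φ ⁻¹' Set.Iic (-ε) with hK
      have hKc : IsCompact K := (isClosed_Iic.preimage Φ.continuous).isCompact
      have hfKc : IsCompact (f '' K) := hKc.image f.continuous
      have hyn : y ∉ f '' K := by
        rintro ⟨x, hxK, hfx⟩
        have hxF : x ∈ F := by simp [hF, hfx]
        have := hΦF x hxF
        have hx' : Φ x ≤ -ε := hxK
        linarith
      obtain ⟨g, hg0, hg1, hg01⟩ := exists_continuous_zero_one_of_isClosed
        (isClosed_singleton (x := y)) hfKc.isClosed (Set.disjoint_singleton_left.mpr hyn)
      set M : ℝ := ‖Φ‖ with hM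
      set ψ : C(Y, ℝ) := ContinuousMap.const Y (-M) * g with hψ
      have hψapp : ∀ a, ψ a = -M * g a := fun a => rfl
      have hψle : ψ ≤ 0 := by
        rw [ContinuousMap.le_def]
        intro a
        rw [hψapp]
        have h1 : 0 ≤ g a := (hg01 a).1
        have h2 : 0 ≤ M := norm_nonneg Φ
        simpa using mul_nonneg h2 h1
      have hψ0 : ψ y = 0 := by
        rw [hψapp]
        have : g y = 0 := hg0 (Set.mem_singleton y)
        simp [this]
      have hcomp : ψ.comp f ≤ ContinuousMap.const X ε + Φ := by
        rw [ContinuousMap.le_def]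
        intro x
        have hval : (ψ.comp f) x = -M * g (f x) := rfl
        have hrhs : (ContinuousMap.const X ε + Φ) x = ε + Φ x := rfl
        rw [hval, hrhs]
        by_cases hx : Φ x ≤ -ε
        · have hmem : f x ∈ f '' K := ⟨x, hx, rfl⟩
          have hg : g (f x) = 1 := hg1 hmem
          rw [hg]
          have habs : |Φ x| ≤ M := Φ.norm_coe_le_norm x
          have := abs_le.mp habs
          linarith [this.1]
        · have h1 : 0 ≤ g (f x) := (hg01 (f x)).1
          have h2 : 0 ≤ M := norm_nonneg Φ
          have h3 : 0 ≤ M * g (f x) := mul_nonneg h2 h1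
          push_neg at hx
          nlinarith
      have hfin : ν (ψ.comp f) ≤ r := by
        have h1 : ν (ψ.comp f) ≤ ν (ContinuousMap.const X ε + Φ) := IM.mono hν hcomp
        have h2 : ν (ContinuousMap.const X ε + Φ) = ε + ν Φ := hν.2.1 ε Φ
        have : r' < r := by exact_mod_cast hr'2
        rw [h2] at h1
        simp only [hε] at h1 ⊢
        linarith
      have hstep : density (pushforward f ν) y ≤ ((pushforward f ν ψ : ℝ) : EReal) :=
        iInf_le (fun φ : {φ : C(Y, ℝ) // φ ≤ 0 ∧ φ y = 0} =>
          ((pushforward f ν φ.1 : ℝ) : EReal)) ⟨ψ, hψle, hψ0⟩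
      exact le_trans hstep (EReal.coe_le_coe_iff.mpr hfin)
    · -- empty fiber
      have hclosed : IsClosed (Set.range f) := (isCompact_range f.continuous).isClosed
      have hyn : y ∉ Set.range f := by
        rintro ⟨x, hx⟩
        exact hne ⟨x, by simp [hF, hx]⟩
      obtain ⟨g, hg0, hg1, hg01⟩ := exists_continuous_zero_one_of_isClosed
        (isClosed_singleton (x := y)) hclosed (Set.disjoint_singleton_left.mpr hyn)
      set c : ℝ := min r 0 with hc
      have hc0 : c ≤ 0 := min_le_right _ _
      set ψ : C(Y, ℝ) := ContinuousMap.const Y c * g with hψ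
      have hψapp : ∀ a, ψ a = c * g a := fun a => rfl
      have hψle : ψ ≤ 0 := by
        rw [ContinuousMap.le_def]
        intro a
        rw [hψapp]
        have h1 : 0 ≤ g a := (hg01 a).1
        simpa using mul_nonpos_iff.mpr (Or.inr ⟨hc0, h1⟩)
      have hψ0 : ψ y = 0 := by
        rw [hψapp]
        have : g y = 0 := hg0 (Set.mem_singleton y)
        simp [this]
      have hcompc : ψ.comp f = ContinuousMap.const X c := by
        ext x
        have : g (f x) = 1 := hg1 ⟨x, rfl⟩
        show c * g (f x) = c
        rw [this, mul_one]
      have hfin : ν (ψ.comp f) ≤ r := by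
        rw [hcompc, IM.const hν]
        exact min_le_left _ _
      have hstep : density (pushforward f ν) y ≤ ((pushforward f ν ψ : ℝ) : EReal) :=
        iInf_le (fun φ : {φ : C(Y, ℝ) // φ ≤ 0 ∧ φ y = 0} =>
          ((pushforward f ν φ.1 : ℝ) : EReal)) ⟨ψ, hψle, hψ0⟩
      exact le_trans hstep (EReal.coe_le_coe_iff.mpr hfin)
  -- conclude
  refine le_antisymm ?_ hge
  by_contra h
  push_neg at h
  obtain ⟨r, hr1, hr2⟩ := EReal.exists_between_coe_real h
  exact absurd (hle r hr1) (not_le.mpr hr2)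
end
end

section
/- Let A be a closed subset of a compact Hausdorff space X and 𝕄 ∈ I(IX) an idempotent measure on IX with β_{IX}(𝕄) ∈ IA. Then 𝕄 ∈ I(IA), i.e., β_{IX}⁻¹(IA) ⊆ I²A. -/
open Topology

noncomputable section

theorem barycenter_preimage_subset {X : Type*} [TopologicalSpace X] [CompactSpace X]
    [T2Space X] (A : Set X) (hA : IsClosed A) (M : C(IM X, ℝ) → ℝ)
    (hM : IsIdempotentMeasure M)
    (hsupp : ∀ x ∉ A, density (fun φ : C(X, ℝ) => M (tilde φ)) x = ⊥) :
    ∀ ν : IM X, density M ν ≠ ⊥ → ∀ x ∉ A, density ν.1 x = ⊥ := by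
  intro ν hν x hx
  obtain ⟨hM1, hMc, hMmax⟩ := hM
  have hmono : ∀ f g : C(IM X, ℝ), f ≤ g → M f ≤ M g := by
    intro f g hfg
    have h : f ⊔ g = g := sup_eq_right.mpr hfg
    calc M f ≤ max (M f) (M g) := le_max_left _ _
      _ = M (f ⊔ g) := (hMmax f g).symm
      _ = M g := by rw [h]
  -- lower bound from density M ν ≠ ⊥
  set c : EReal := density M ν with hc
  have hcle : ∀ Φ : {Φ : C(IM X, ℝ) // Φ ≤ 0 ∧ Φ ν = 0}, c ≤ ((M Φ.1 : ℝ) : EReal) :=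
    fun Φ => iInf_le _ Φ
  have hctop : c ≠ ⊤ := by
    have := hcle ⟨0, le_refl _, rfl⟩
    exact ne_top_of_le_ne_top (EReal.coe_ne_top _) this
  set creal : ℝ := c.toReal with hcreal
  have hcc : c = (creal : EReal) := (EReal.coe_toReal hctop hν).symm
  have key : ∀ r : ℝ, ∃ φ : {φ : C(X, ℝ) // φ ≤ 0 ∧ φ x = 0}, ν.1 φ.1 < r := by
    intro r
    have hb := hsupp x hx
    rw [density, iInf_eq_bot] at hb
    obtain ⟨φ, hφ⟩ := hb ((r + creal : ℝ) : EReal) (EReal.bot_lt_coe _)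
    have hφ' : M (tilde φ.1) < r + creal := by exact_mod_cast hφ
    refine ⟨φ, ?_⟩
    set t : ℝ := ν.1 φ.1 with ht
    set Φ : C(IM X, ℝ) := (ContinuousMap.const (IM X) (-t) + tilde φ.1) ⊓ 0 with hΦ
    have hΦle : Φ ≤ 0 := inf_le_right
    have hΦν : Φ ν = 0 := by
      simp [hΦ, tilde, ← ht]
    have h1 : c ≤ ((M Φ : ℝ) : EReal) := hcle ⟨Φ, hΦle, hΦν⟩
    have h2 : M Φ ≤ -t + M (tilde φ.1) := by
      have := hmono Φ (ContinuousMap.const (IM X) (-t) + tilde φ.1) inf_le_left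
      rwa [hMc] at this
    have h3 : creal ≤ M Φ := by
      rw [hcc] at h1; exact_mod_cast h1
    linarith
  rw [density, iInf_eq_bot]
  intro b hb
  rcases eq_or_ne b ⊤ with rfl | hbt
  · obtain ⟨φ, hφ⟩ := key 0
    exact ⟨φ, EReal.coe_lt_top _⟩
  · set r : ℝ := b.toReal with hr
    have hbr : b = (r : EReal) := (EReal.coe_toReal hbt (ne_of_gt hb)).symm
    obtain ⟨φ, hφ⟩ := key r
    exact ⟨φ, by rw [hbr]; exact_mod_cast hφ⟩
end
end

section
/- Let f: X → Y be a continuous map between compact Hausdorff spaces such that the induced map If: IX → IY on spaces of idempotent measures is open. Then f is open. -/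
open Topology

noncomputable section

def diracIM {Z : Type*} [TopologicalSpace Z] (z : Z) : IM Z :=
  ⟨fun φ => φ z, rfl, fun _ _ => rfl, fun _ _ => rfl⟩

lemma diracIM_continuous {Z : Type*} [TopologicalSpace Z] :
    Continuous (fun z : Z => diracIM z) :=
  Continuous.subtype_mk (continuous_pi fun φ => φ.continuous) _

lemma idem_mono {Z : Type*} [TopologicalSpace Z] {μ : C(Z, ℝ) → ℝ}
    (hμ : IsIdempotentMeasure μ) {a b : C(Z, ℝ)} (hab : a ≤ b) : μ a ≤ μ b := by
  have h2 := hμ.2.2 a b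
  rw [sup_eq_right.mpr hab] at h2
  calc μ a ≤ max (μ a) (μ b) := le_max_left _ _
    _ = μ b := h2.symm

theorem open_of_pushforward_open {X Y : Type*} [TopologicalSpace X] [CompactSpace X]
    [T2Space X] [TopologicalSpace Y] [CompactSpace Y] [T2Space Y] (f : C(X, Y))
    (h : ∀ μ : IM X, IsIdempotentMeasure (pushforward f μ.1))
    (hopen : IsOpenMap (fun μ : IM X => (⟨pushforward f μ.1, h μ⟩ : IM Y))) :
    IsOpenMap f := by
  intro U hU
  rw [isOpen_iff_forall_mem_open]
  rintro y ⟨x0, hx0U, rfl⟩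
  -- Urysohn function φ : X → [-1,0], φ x0 = 0, φ = -1 off U
  obtain ⟨g, hg0, hg1, hg01⟩ := exists_continuous_zero_one_of_isClosed
    (isClosed_compl_iff.mpr hU) (isClosed_singleton (x := x0))
    (Set.disjoint_singleton_right.mpr (fun hx => hx hx0U))
  set φ : C(X, ℝ) := g - 1 with hφ
  have hφx0 : φ x0 = 0 := by
    simp [hφ, hg1 rfl]
  have hφle : ∀ x, φ x ≤ 0 := by
    intro x
    have := (hg01 x).2
    simp [hφ]; linarith
  have hφcompl : ∀ x, x ∉ U → φ x = -1 := by
    intro x hx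
    have := hg0 (Set.mem_compl hx)
    simp [hφ, Pi.zero_apply] at this ⊢
    simp [this]
  -- the open set V in IM X
  set V : Set (IM X) := {μ | -(1/2 : ℝ) < μ.1 φ} with hV
  have hVopen : IsOpen V :=
    isOpen_lt continuous_const ((continuous_apply φ).comp continuous_subtype_val)
  set If : IM X → IM Y := fun μ => (⟨pushforward f μ.1, h μ⟩ : IM Y) with hIf
  have hIVopen : IsOpen (If '' V) := hopen V hVopen
  refine ⟨(fun y => diracIM y) ⁻¹' (If '' V), ?_, hIVopen.preimage diracIM_continuous, ?_⟩
  · -- preimage ⊆ f '' U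
    rintro y ⟨μ, hμV, hμy⟩
    by_contra hy
    -- K = {x | -1/2 ≤ φ x} ⊆ U, disjoint from f⁻¹ y
    set K : Set X := {x | -(1/2 : ℝ) ≤ φ x} with hK
    have hKclosed : IsClosed K := isClosed_le continuous_const φ.continuous
    have hKU : K ⊆ U := by
      intro x hx
      by_contra hxU
      have := hφcompl x hxU
      rw [hK] at hx
      simp only [Set.mem_setOf_eq, this] at hx
      linarith
    have hfK : IsClosed (f '' K) :=
      (hKclosed.isCompact.image f.continuous).isClosed
    have hyK : y ∉ f '' K := by
      rintro ⟨x, hxK, rfl⟩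
      exact hy ⟨x, hKU hxK, rfl⟩
    obtain ⟨h2, h20, h21, h201⟩ := exists_continuous_zero_one_of_isClosed
      hfK (isClosed_singleton (x := y)) (Set.disjoint_singleton_right.mpr hyK)
    set ψ : C(Y, ℝ) := (-(1/2 : ℝ)) • h2 with hψ
    have hφψ : φ ≤ ψ.comp f := by
      rw [ContinuousMap.le_def]
      intro x
      by_cases hx : x ∈ K
      · have : h2 (f x) = 0 := h20 ⟨x, hx, rfl⟩
        simp [hψ, this, hφle x]
      · rw [hK] at hx
        simp only [Set.mem_setOf_eq, not_le] at hx
        have := (h201 (f x)).2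
        simp only [ContinuousMap.comp_apply, hψ, ContinuousMap.smul_apply, smul_eq_mul]
        nlinarith
    have hle : μ.1 φ ≤ μ.1 (ψ.comp f) := idem_mono μ.2 hφψ
    have heq : pushforward f μ.1 ψ = ψ y := by
      have : (If μ).1 = (diracIM y).1 := by rw [hμy]
      exact congrFun this ψ
    have hψy : ψ y = -(1/2 : ℝ) := by
      simp [hψ, h21 rfl]
    rw [hV] at hμV
    simp only [Set.mem_setOf_eq] at hμV
    have : pushforward f μ.1 ψ = μ.1 (ψ.comp f) := rfl
    rw [heq, hψy] at this
    linarith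
  · -- f x0 is in the preimage
    refine ⟨diracIM x0, ?_, ?_⟩
    · rw [hV]
      simp only [Set.mem_setOf_eq, diracIM, hφx0]
      norm_num
    · apply Subtype.ext
      rfl
end
end
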